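/- arXiv:0810.3957 — 4 statements merged into one kernel-verified Lean document; each statement's English description precedes it below -/
import Mathlib

section
/- Under the standing assumptions on P and 𝒟, the tessellation {T(p) : p ∈ P} is cM/(d+1)-separated; that is: (a) for any n ≥ 0, any distinct points p₀, p₁, …, p_n ∈ P and any point q ∈ ℝ^d with dist(q, T(p_i)) < cM/(d+1) for all i = 0,…,n, the intersection T(p₀) ∩ T(p₁) ∩ ⋯ ∩ T(p_n) is non-empty; and (b) for any d+2 distinct points p₀, …, p_{d+1} ∈ P, the intersection T(p₀) ∩ ⋯ ∩ T(p_{d+1}) is empty. -/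
/-!
For `p ∈ P` let `φ_p(y)` be the barycentric coordinate of `p` at `y` in a cell containing `y`
(zero if `p` is not a vertex of that cell); the cells meet face to face, so this is well defined.
Inside a cell `τ ∋ p`, `φ_p` changes by at most `|y - z| / d(p, H(τ ∖ {p})) < |y - z| / (cM)`,
and since the cells form a locally finite closed cover, `φ_p` is `(cM)⁻¹`-Lipschitz on all of
`ℝ^d`. On `T(p)` the coordinate of `p` is maximal, hence `φ_p ≥ 1/(d+1)` there.

(a) At `q`, every `φ_{p_i}` is then positive, so all `p_i` are vertices of the cell containing `q`,
whose barycenter lies in every `T(p_i)`. (b) At a common point of the `T(p_i)` all `φ_{p_i}` are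
positive, so the `p_i` are `d + 2` distinct vertices of one cell, which has only `d + 1`.
-/

noncomputable section

open scoped Classical

open Metric

variable {d : ℕ}

/-- `P` is `M`-separated. -/
def IsSeparatedSet (M : ℝ) (P : Set (EuclideanSpace ℝ (Fin d))) : Prop :=
  ∀ p ∈ P, ∀ q ∈ P, p ≠ q → M ≤ dist p q

/-- `P` is `M`-syndetic. -/
def IsSyndeticSet (M : ℝ) (P : Set (EuclideanSpace ℝ (Fin d))) : Prop :=
  ∀ x : EuclideanSpace ℝ (Fin d), ∃ p ∈ P, dist x p < M

/-- `T(p,τ)`: the points of `Conv(τ)` whose barycentric coordinate at `p`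
is maximal. -/
def Tcell (τ : Finset (EuclideanSpace ℝ (Fin d))) (p : EuclideanSpace ℝ (Fin d)) :
    Set (EuclideanSpace ℝ (Fin d)) :=
  {x | ∃ lam : EuclideanSpace ℝ (Fin d) → ℝ,
    (∀ q ∈ τ, 0 ≤ lam q) ∧ (∑ q ∈ τ, lam q) = 1 ∧ (∀ q ∈ τ, lam q ≤ lam p) ∧
    x = ∑ q ∈ τ, lam q • q}

/-- `T(p) = ⋃_{τ ∈ 𝒟, p ∈ τ} T(p,τ)`. -/
def Tset (𝒟 : Set (Finset (EuclideanSpace ℝ (Fin d)))) (p : EuclideanSpace ℝ (Fin d)) :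
    Set (EuclideanSpace ℝ (Fin d)) :=
  ⋃ τ ∈ {τ ∈ 𝒟 | p ∈ τ}, Tcell τ p

/-- `S(p) = ⋃_{τ ∈ 𝒟, p ∈ τ} Conv(τ)`. -/
def Sset (𝒟 : Set (Finset (EuclideanSpace ℝ (Fin d)))) (p : EuclideanSpace ℝ (Fin d)) :
    Set (EuclideanSpace ℝ (Fin d)) :=
  ⋃ τ ∈ {τ ∈ 𝒟 | p ∈ τ}, convexHull ℝ (↑τ : Set (EuclideanSpace ℝ (Fin d)))

/-- Standing assumptions: `P` is `M`-separated and `2M`-syndetic and `𝒟` is a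
collection of `(d+1)`-element affinely independent subsets of `P` such that:
(i) the sets `Conv(τ)`, `τ ∈ 𝒟`, cover `ℝ^d` with pairwise disjoint interiors;
(ii) any two cells meet face to face; (iii) every `p ∈ P` lies in some `τ ∈ 𝒟`;
(iv) every `τ ∈ 𝒟` lies in a closed ball of radius `< √5·M`;
(v) `d(p, H(τ∖{p})) > c·M` for every `τ ∈ 𝒟` and `p ∈ τ`. -/
def Standing (M c : ℝ) (P : Set (EuclideanSpace ℝ (Fin d)))
    (𝒟 : Set (Finset (EuclideanSpace ℝ (Fin d)))) : Prop :=
  IsSeparatedSet M P ∧ IsSyndeticSet (2 * M) P ∧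
  (∀ τ ∈ 𝒟, τ.card = d + 1 ∧ (↑τ : Set (EuclideanSpace ℝ (Fin d))) ⊆ P ∧
    AffineIndependent ℝ (fun q : (τ : Set (EuclideanSpace ℝ (Fin d))) =>
      (q : EuclideanSpace ℝ (Fin d)))) ∧
  (⋃ τ ∈ 𝒟, convexHull ℝ (↑τ : Set (EuclideanSpace ℝ (Fin d)))) = Set.univ ∧
  (∀ τ ∈ 𝒟, ∀ τ' ∈ 𝒟, τ ≠ τ' →
    interior (convexHull ℝ (↑τ : Set (EuclideanSpace ℝ (Fin d)))) ∩
      interior (convexHull ℝ (↑τ' : Set (EuclideanSpace ℝ (Fin d)))) = ∅) ∧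
  (∀ τ ∈ 𝒟, ∀ τ' ∈ 𝒟,
    convexHull ℝ (↑τ : Set (EuclideanSpace ℝ (Fin d))) ∩
      convexHull ℝ (↑τ' : Set (EuclideanSpace ℝ (Fin d)))
    = convexHull ℝ (↑(τ ∩ τ') : Set (EuclideanSpace ℝ (Fin d)))) ∧
  (∀ p ∈ P, ∃ τ ∈ 𝒟, p ∈ τ) ∧
  (∀ τ ∈ 𝒟, ∃ z r, r < Real.sqrt 5 * M ∧
    (↑τ : Set (EuclideanSpace ℝ (Fin d))) ⊆ closedBall z r) ∧
  (∀ τ ∈ 𝒟, ∀ p ∈ τ,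
    c * M < Metric.infDist p
      (affineSpan ℝ (↑(τ.erase p) : Set (EuclideanSpace ℝ (Fin d)))
        : Set (EuclideanSpace ℝ (Fin d))))

open Set Filter Topology

theorem dist_le_mul_of_eventually_dist_le {X : Type*} [PseudoMetricSpace X] {g : ℝ → X}
    {L : ℝ} (hg : ∀ t, ∀ᶠ u in 𝓝 t, dist (g u) (g t) ≤ L * dist u t) {a b : ℝ}
    (hab : a ≤ b) : dist (g b) (g a) ≤ L * (b - a) := by
  have hcont : Continuous g := continuous_iff_continuousAt.2 fun t =>
    tendsto_iff_dist_tendsto_zero.2 <|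
      squeeze_zero' (Eventually.of_forall fun _ => dist_nonneg) (hg t) <| by
        simpa using ((continuous_id.dist (continuous_const (y := t))).tendsto t).const_mul L
  have hclosed : IsClosed {t | dist (g t) (g a) ≤ L * (t - a)} :=
    isClosed_le (hcont.dist continuous_const)
      (continuous_const.mul (continuous_id.sub continuous_const))
  refine (hclosed.inter isClosed_Icc).mem_of_ge_of_forall_exists_gt (by simp) hab ?_
  rintro t ⟨hta, -, htb⟩
  obtain ⟨u, hut, htu, hub⟩ :=
    (((hg t).filter_mono nhdsWithin_le_nhds).and (Ioc_mem_nhdsGT htb)).exists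
  refine ⟨u, ?_, htu, hub⟩
  rw [Real.dist_eq, abs_of_pos (sub_pos.2 htu)] at hut
  calc dist (g u) (g a) ≤ dist (g u) (g t) + dist (g t) (g a) := dist_triangle _ _ _
    _ ≤ L * (u - t) + L * (t - a) := add_le_add hut hta
    _ = L * (u - a) := by ring

-- Along a segment, nearby points always share a member of the cover.
theorem LocallyFinite.dist_le_mul_of_forall_mem {ι E X : Type*} [NormedAddCommGroup E]
    [NormedSpace ℝ E] [PseudoMetricSpace X] {s : ι → Set E} (hs : LocallyFinite s)
    (hclosed : ∀ i, IsClosed (s i)) (hcov : ∀ y, ∃ i, y ∈ s i) {f : E → X} {L : ℝ}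
    (hf : ∀ i, ∀ y ∈ s i, ∀ z ∈ s i, dist (f y) (f z) ≤ L * dist y z) (y z : E) :
    dist (f y) (f z) ≤ L * dist y z := by
  let γ : ℝ → E := AffineMap.lineMap z y
  have hloc : ∀ t, ∀ᶠ u in 𝓝 t, dist (f (γ u)) (f (γ t)) ≤ L * dist z y * dist u t := by
    intro t
    filter_upwards [(AffineMap.lineMap_continuous.tendsto t).eventually
      (hs.eventually_subset hclosed (γ t))] with u hu
    obtain ⟨i, hi⟩ := hcov (γ u)
    calc dist (f (γ u)) (f (γ t)) ≤ L * dist (γ u) (γ t) := hf i _ hi _ (hu hi)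
      _ = L * dist z y * dist u t := by rw [dist_lineMap_lineMap]; ring
  simpa [γ, dist_comm z y] using dist_le_mul_of_eventually_dist_le hloc zero_le_one

theorem finite_inter_of_pairwise_le_dist {X : Type*} [MetricSpace X] [ProperSpace X] {M : ℝ}
    (hM : 0 < M) {P : Set X} (hP : P.Pairwise fun p q => M ≤ dist p q) {K : Set X}
    (hK : Bornology.IsBounded K) : (K ∩ P).Finite := by
  refine finite_isBounded_inter_isClosed ?_ hK (isClosed_of_pairwise_le_dist hM hP)
  refine isDiscrete_iff_forall_mem_exists_isOpen.2 fun y hy => ⟨ball y M, isOpen_ball, ?_⟩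
  ext z
  refine ⟨fun ⟨hzy, hz⟩ => ?_, fun hzy => ?_⟩
  · by_contra hne
    exact (hP hz hy hne).not_gt hzy
  · rw [mem_singleton_iff.1 hzy]
    exact ⟨mem_ball_self hM, hy⟩

theorem Finset.piecewise_nonneg {α : Type*} {σ : Finset α} [∀ j, Decidable (j ∈ σ)]
    {w : α → ℝ} (hw : ∀ r ∈ σ, 0 ≤ w r) : 0 ≤ σ.piecewise w 0 := fun r => by
  by_cases hr : r ∈ σ
  · rw [σ.piecewise_eq_of_mem _ _ hr]; exact hw r hr
  · rw [σ.piecewise_eq_of_notMem _ _ hr]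

section Weights

variable {E : Type*} [AddCommGroup E] [Module ℝ E]

def IsWeightOn (σ : Finset E) (y : E) (w : E → ℝ) : Prop :=
  (∀ r ∉ σ, w r = 0) ∧ ∑ r ∈ σ, w r = 1 ∧ ∑ r ∈ σ, w r • r = y

theorem isWeightOn_piecewise {σ : Finset E} [∀ j, Decidable (j ∈ σ)] {w : E → ℝ}
    (hw : ∑ r ∈ σ, w r = 1) : IsWeightOn σ (∑ r ∈ σ, w r • r) (σ.piecewise w 0) :=
  ⟨fun _ hr => σ.piecewise_eq_of_notMem _ _ hr,
    hw ▸ Finset.sum_congr rfl fun _ hr => σ.piecewise_eq_of_mem _ _ hr,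
    Finset.sum_congr rfl fun _ hr => by rw [σ.piecewise_eq_of_mem _ _ hr]⟩

theorem exists_nonneg_isWeightOn {σ : Finset E} {y : E}
    (hy : y ∈ convexHull ℝ (σ : Set E)) : ∃ w, 0 ≤ w ∧ IsWeightOn σ y w := by
  obtain ⟨w, hw0, hw1, rfl⟩ := Finset.mem_convexHull'.1 hy
  exact ⟨_, Finset.piecewise_nonneg hw0, isWeightOn_piecewise hw1⟩

namespace IsWeightOn

variable {σ τ : Finset E} {y : E} {w v : E → ℝ}

theorem mem_convexHull (hw : IsWeightOn σ y w) (hw0 : 0 ≤ w) :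
    y ∈ convexHull ℝ (σ : Set E) :=
  Finset.mem_convexHull'.2 ⟨w, fun r _ => hw0 r, hw.2.1, hw.2.2⟩

theorem mono (hw : IsWeightOn σ y w) (hστ : σ ⊆ τ) : IsWeightOn τ y w := by
  have hzero : ∀ r ∈ τ, r ∉ σ → w r = 0 := fun r _ hr => hw.1 r hr
  refine ⟨fun r hr => hw.1 r fun h => hr (hστ h), ?_, ?_⟩
  · rw [← Finset.sum_subset hστ hzero, hw.2.1]
  · rw [← Finset.sum_subset hστ fun r hr hrσ => by rw [hzero r hr hrσ, zero_smul], hw.2.2]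

theorem eq (hσ : AffineIndependent ℝ (fun q : (σ : Set E) => (q : E)))
    (hw : IsWeightOn σ y w) (hv : IsWeightOn σ y v) : w = v := by
  funext r
  by_cases hr : r ∈ σ
  · exact hσ.eq_of_sum_eq_sum_subtype (hw.2.1.trans hv.2.1.symm) (hw.2.2.trans hv.2.2.symm)
      r hr
  · rw [hw.1 r hr, hv.1 r hr]

end IsWeightOn

structure IsFaceToFace [DecidableEq E] (𝒟 : Set (Finset E)) : Prop where
  affineIndependent : ∀ τ ∈ 𝒟, AffineIndependent ℝ (fun q : (τ : Set E) => (q : E))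
  convexHull_inter : ∀ τ ∈ 𝒟, ∀ τ' ∈ 𝒟,
    convexHull ℝ (τ : Set E) ∩ convexHull ℝ (τ' : Set E) = convexHull ℝ (↑(τ ∩ τ') : Set E)

/-- Barycentric coordinates are recorded as functions on all of `E`, vanishing off the cell, so
that coordinates taken in different cells can be compared. -/
def IsBaryCoord (𝒟 : Set (Finset E)) (y : E) (w : E → ℝ) : Prop :=
  0 ≤ w ∧ ∃ σ ∈ 𝒟, IsWeightOn σ y w

theorem isBaryCoord_piecewise {𝒟 : Set (Finset E)} {τ : Finset E} [∀ j, Decidable (j ∈ τ)]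
    (hτ : τ ∈ 𝒟) {w : E → ℝ} (hw0 : ∀ r ∈ τ, 0 ≤ w r) (hw1 : ∑ r ∈ τ, w r = 1) :
    IsBaryCoord 𝒟 (∑ r ∈ τ, w r • r) (τ.piecewise w 0) :=
  ⟨Finset.piecewise_nonneg hw0, τ, hτ, isWeightOn_piecewise hw1⟩

-- Both coordinate vectors coincide with one taken on the common face `σ ∩ σ'`.
theorem IsBaryCoord.unique [DecidableEq E] {𝒟 : Set (Finset E)} (h𝒟 : IsFaceToFace 𝒟)
    {y : E} {w v : E → ℝ} (hw : IsBaryCoord 𝒟 y w) (hv : IsBaryCoord 𝒟 y v) : w = v := by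
  obtain ⟨hw0, σ, hσ, hw⟩ := hw
  obtain ⟨hv0, σ', hσ', hv⟩ := hv
  have hy : y ∈ convexHull ℝ (↑(σ ∩ σ') : Set E) := by
    rw [← h𝒟.convexHull_inter σ hσ σ' hσ']
    exact ⟨hw.mem_convexHull hw0, hv.mem_convexHull hv0⟩
  obtain ⟨u, -, hu⟩ := exists_nonneg_isWeightOn hy
  exact (hw.eq (h𝒟.affineIndependent σ hσ) (hu.mono Finset.inter_subset_left)).trans
    (hv.eq (h𝒟.affineIndependent σ' hσ') (hu.mono Finset.inter_subset_right)).symm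

/-- Arbitrary at points outside `⋃ τ ∈ 𝒟, convexHull ℝ τ`. -/
def baryCoord (𝒟 : Set (Finset E)) (y : E) : E → ℝ :=
  Classical.epsilon (IsBaryCoord 𝒟 y)

theorem IsBaryCoord.baryCoord_eq [DecidableEq E] {𝒟 : Set (Finset E)}
    (h𝒟 : IsFaceToFace 𝒟) {y : E} {w : E → ℝ} (hw : IsBaryCoord 𝒟 y w) : baryCoord 𝒟 y = w :=
  (Classical.epsilon_spec ⟨w, hw⟩).unique h𝒟 hw

theorem isBaryCoord_baryCoord {𝒟 : Set (Finset E)}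
    (hcov : ⋃ τ ∈ 𝒟, convexHull ℝ (τ : Set E) = univ) (y : E) :
    IsBaryCoord 𝒟 y (baryCoord 𝒟 y) := by
  obtain ⟨τ, hτ, hy⟩ :=
    mem_iUnion₂.1 (hcov ▸ mem_univ y : y ∈ ⋃ τ ∈ 𝒟, convexHull ℝ (τ : Set E))
  obtain ⟨w, hw0, hw⟩ := exists_nonneg_isWeightOn hy
  exact Classical.epsilon_spec ⟨w, hw0, τ, hτ, hw⟩

theorem exists_mem_of_baryCoord_ne_zero {𝒟 : Set (Finset E)}
    (hcov : ⋃ τ ∈ 𝒟, convexHull ℝ (τ : Set E) = univ) (y : E) :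
    ∃ σ ∈ 𝒟, ∀ p, baryCoord 𝒟 y p ≠ 0 → p ∈ σ := by
  obtain ⟨-, σ, hσ, hw⟩ := isBaryCoord_baryCoord hcov y
  exact ⟨σ, hσ, fun p => not_imp_comm.1 (hw.1 p)⟩

end Weights

section Triangulation

variable {E : Type*} [NormedAddCommGroup E] [NormedSpace ℝ E]

-- `p - a⁻¹ • (y - z)` lies on the face opposite to `p`, where `a = μ p - ν p`.
theorem infDist_mul_abs_sub_le [DecidableEq E] {σ : Finset E} {p y z : E} {μ ν : E → ℝ} (hp : p ∈ σ)
    (hμ : IsWeightOn σ y μ) (hν : IsWeightOn σ z ν) :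
    infDist p (affineSpan ℝ (↑(σ.erase p) : Set E)) * |μ p - ν p| ≤ dist y z := by
  set a := μ p - ν p
  rcases eq_or_ne a 0 with ha | ha
  · simp [ha]
  have hsum : ∑ r ∈ σ.erase p, (ν r - μ r) / a = 1 := by
    rw [← Finset.sum_div, Finset.sum_erase_eq_sub hp, Finset.sum_sub_distrib, hμ.2.1, hν.2.1,
      div_eq_one_iff_eq ha]
    ring
  have hpoint : ∑ r ∈ σ.erase p, ((ν r - μ r) / a) • r = p - a⁻¹ • (y - z) := by
    simp_rw [div_eq_inv_mul, ← smul_smul, ← Finset.smul_sum, Finset.sum_erase_eq_sub hp,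
      sub_smul, Finset.sum_sub_distrib, hμ.2.2, hν.2.2]
    rw [show z - y - (ν p • p - μ p • p) = a • p - (y - z) by simp only [a, sub_smul]; abel,
      smul_sub, smul_smul, inv_mul_cancel₀ ha, one_smul]
  have hmem : p - a⁻¹ • (y - z) ∈ affineSpan ℝ (↑(σ.erase p) : Set E) := by
    have := affineCombination_mem_affineSpan_image hsum (s' := ↑(σ.erase p))
      (fun _ hi hi' => absurd hi hi') id
    rw [Finset.affineCombination_eq_linear_combination _ _ _ hsum, image_id] at this
    simpa only [id, hpoint] using this
  calc infDist p (affineSpan ℝ (↑(σ.erase p) : Set E)) * |a|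
      ≤ dist p (p - a⁻¹ • (y - z)) * |a| :=
        mul_le_mul_of_nonneg_right (infDist_le_dist_of_mem hmem) (abs_nonneg a)
    _ = dist y z := by
        rw [dist_eq_norm, sub_sub_cancel, norm_smul, norm_inv, Real.norm_eq_abs, dist_eq_norm,
          mul_comm, ← mul_assoc, mul_inv_cancel₀ (abs_ne_zero.2 ha), one_mul]

theorem dist_baryCoord_le [DecidableEq E] {𝒟 : Set (Finset E)}
    (h𝒟 : IsFaceToFace 𝒟)
    (hcov : ⋃ τ ∈ 𝒟, convexHull ℝ (τ : Set E) = univ)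
    (hlf : LocallyFinite fun τ : 𝒟 => convexHull ℝ (τ : Set E)) {K : ℝ} (hK : 0 < K)
    (hheight : ∀ τ ∈ 𝒟, ∀ p ∈ τ, K < infDist p (affineSpan ℝ (↑(τ.erase p) : Set E)))
    (p y z : E) : dist (baryCoord 𝒟 y p) (baryCoord 𝒟 z p) ≤ K⁻¹ * dist y z := by
  have hcover : ∀ y, ∃ τ : 𝒟, y ∈ convexHull ℝ (τ : Set E) := fun y => by
    obtain ⟨τ, hτ, hy⟩ :=
      mem_iUnion₂.1 (hcov ▸ mem_univ y : y ∈ ⋃ τ ∈ 𝒟, convexHull ℝ (τ : Set E))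
    exact ⟨⟨τ, hτ⟩, hy⟩
  refine hlf.dist_le_mul_of_forall_mem (f := fun y => baryCoord 𝒟 y p)
    (fun τ : 𝒟 => τ.1.finite_toSet.isClosed_convexHull (𝕜 := ℝ)) hcover
    (fun ⟨τ, hτ⟩ y hy z hz => ?_) y z
  obtain ⟨μ, hμ0, hμ⟩ := exists_nonneg_isWeightOn hy
  obtain ⟨ν, hν0, hν⟩ := exists_nonneg_isWeightOn hz
  rw [IsBaryCoord.baryCoord_eq h𝒟 ⟨hμ0, τ, hτ, hμ⟩,
    IsBaryCoord.baryCoord_eq h𝒟 ⟨hν0, τ, hτ, hν⟩, Real.dist_eq]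
  by_cases hp : p ∈ τ
  · rw [le_inv_mul_iff₀ hK]
    exact (mul_le_mul_of_nonneg_right (hheight τ hτ p hp).le (abs_nonneg _)).trans
      (infDist_mul_abs_sub_le hp hμ hν)
  · rw [hμ.1 p hp, hν.1 p hp, sub_self, abs_zero]
    positivity

theorem locallyFinite_convexHull [ProperSpace E] {M R : ℝ} {P : Set E}
    {𝒟 : Set (Finset E)} (hM : 0 < M) (hP : P.Pairwise fun p q => M ≤ dist p q)
    (hsub : ∀ τ ∈ 𝒟, (τ : Set E) ⊆ P)
    (hball : ∀ τ ∈ 𝒟, ∃ z r, r < R ∧ (τ : Set E) ⊆ closedBall z r) :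
    LocallyFinite fun τ : 𝒟 => convexHull ℝ (τ : Set E) := by
  intro x
  have hfin := finite_inter_of_pairwise_le_dist hM hP (isBounded_closedBall (x := x)
    (r := 2 * R + 1))
  refine ⟨ball x 1, ball_mem_nhds x one_pos,
    (hfin.toFinset.powerset.finite_toSet.preimage Subtype.val_injective.injOn).subset ?_⟩
  rintro ⟨τ, hτ⟩ ⟨w, hwτ, hwx⟩
  rw [mem_preimage, Finset.mem_coe, Finset.mem_powerset]
  intro v hv
  obtain ⟨z, r, hr, hτz⟩ := hball τ hτ
  have hwz : dist w z ≤ r := convexHull_min hτz (convex_closedBall z r) hwτ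
  have hvz : dist v z ≤ r := hτz hv
  have hwx : dist w x < 1 := hwx
  rw [Finite.mem_toFinset, mem_inter_iff, mem_closedBall]
  exact ⟨by linarith [dist_triangle4 v z w x, dist_comm z w], hsub τ hτ hv⟩

end Triangulation

section Tessellation

variable {𝒟 : Set (Finset (EuclideanSpace ℝ (Fin d)))}

theorem centroid_mem_Tcell {τ : Finset (EuclideanSpace ℝ (Fin d))}
    {p : EuclideanSpace ℝ (Fin d)} (hp : p ∈ τ) : ∑ r ∈ τ, (τ.card : ℝ)⁻¹ • r ∈ Tcell τ p :=
  ⟨fun _ => (τ.card : ℝ)⁻¹, fun _ _ => by positivity,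
    by rw [Finset.sum_const, nsmul_eq_mul,
      mul_inv_cancel₀ (Nat.cast_ne_zero.2 (Finset.card_ne_zero_of_mem hp))],
    fun _ _ => le_rfl, rfl⟩

theorem centroid_mem_Tset {τ : Finset (EuclideanSpace ℝ (Fin d))} (hτ : τ ∈ 𝒟)
    {p : EuclideanSpace ℝ (Fin d)} (hp : p ∈ τ) : ∑ r ∈ τ, (τ.card : ℝ)⁻¹ • r ∈ Tset 𝒟 p :=
  mem_iUnion₂.2 ⟨τ, ⟨hτ, hp⟩, centroid_mem_Tcell hp⟩

theorem inv_le_baryCoord_of_mem_Tset (h𝒟 : IsFaceToFace 𝒟)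
    (hcard : ∀ τ ∈ 𝒟, τ.card = d + 1) {p x : EuclideanSpace ℝ (Fin d)} (hx : x ∈ Tset 𝒟 p) :
    ((d : ℝ) + 1)⁻¹ ≤ baryCoord 𝒟 x p := by
  obtain ⟨τ, ⟨hτ, hp⟩, lam, h0, h1, hmax, rfl⟩ := mem_iUnion₂.1 hx
  rw [(isBaryCoord_piecewise hτ h0 h1).baryCoord_eq h𝒟, τ.piecewise_eq_of_mem _ _ hp,
    inv_le_iff_one_le_mul₀' (by positivity)]
  calc 1 = ∑ r ∈ τ, lam r := h1.symm
    _ ≤ τ.card • lam p := Finset.sum_le_card_nsmul _ _ _ hmax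
    _ = (d + 1) * lam p := by rw [hcard τ hτ, nsmul_eq_mul]; push_cast; ring

theorem baryCoord_pos_of_infDist_lt (h𝒟 : IsFaceToFace 𝒟)
    (hcard : ∀ τ ∈ 𝒟, τ.card = d + 1) {K : ℝ} (hK : 0 < K) {p : EuclideanSpace ℝ (Fin d)}
    (hlip : ∀ y z, dist (baryCoord 𝒟 y p) (baryCoord 𝒟 z p) ≤ K⁻¹ * dist y z)
    {τ : Finset (EuclideanSpace ℝ (Fin d))} (hτ : τ ∈ 𝒟) (hp : p ∈ τ)
    {q : EuclideanSpace ℝ (Fin d)} (hq : infDist q (Tset 𝒟 p) < K / (d + 1)) :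
    0 < baryCoord 𝒟 q p := by
  obtain ⟨x, hx, hqx⟩ := (infDist_lt_iff ⟨_, centroid_mem_Tset hτ hp⟩).1 hq
  have hxp := inv_le_baryCoord_of_mem_Tset h𝒟 hcard hx
  have hclose : K⁻¹ * dist x q < ((d : ℝ) + 1)⁻¹ := by
    rwa [dist_comm, inv_mul_lt_iff₀ hK, ← div_eq_mul_inv]
  have hxq := hlip x q
  rw [Real.dist_eq] at hxq
  linarith [le_abs_self (baryCoord 𝒟 x p - baryCoord 𝒟 q p)]

end Tessellation

theorem stmt15_general (M c : ℝ) (hM : 0 < M) (hc : 0 < c)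
    (P : Set (EuclideanSpace ℝ (Fin d))) (𝒟 : Set (Finset (EuclideanSpace ℝ (Fin d))))
    (hS : Standing M c P 𝒟) :
    (∀ (n : ℕ) (ps : Fin (n + 1) → EuclideanSpace ℝ (Fin d)),
      Function.Injective ps → (∀ i, ps i ∈ P) →
      ∀ q : EuclideanSpace ℝ (Fin d),
        (∀ i, Metric.infDist q (Tset 𝒟 (ps i)) < c * M / (d + 1)) →
        (⋂ i, Tset 𝒟 (ps i)).Nonempty) ∧
    (∀ ps : Fin (d + 2) → EuclideanSpace ℝ (Fin d),
      Function.Injective ps → (∀ i, ps i ∈ P) →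
      (⋂ i, Tset 𝒟 (ps i)) = ∅) := by
  obtain ⟨hsep, -, hcell, hcov, -, hface, hP, hball, hheight⟩ := hS
  have h𝒟 : IsFaceToFace 𝒟 := ⟨fun τ hτ => (hcell τ hτ).2.2, hface⟩
  have hcard := fun τ hτ => (hcell τ hτ).1
  have hlf := locallyFinite_convexHull hM hsep (fun τ hτ => (hcell τ hτ).2.1) hball
  refine ⟨fun n ps _ hps q hq => ?_, fun ps hinj _ => ?_⟩
  · obtain ⟨σ, hσ, hsupp⟩ := exists_mem_of_baryCoord_ne_zero hcov q
    refine ⟨_, mem_iInter.2 fun i => centroid_mem_Tset hσ (hsupp _ ?_)⟩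
    obtain ⟨τ, hτ, hp⟩ := hP _ (hps i)
    exact (baryCoord_pos_of_infDist_lt h𝒟 hcard (mul_pos hc hM)
      (dist_baryCoord_le h𝒟 hcov hlf (mul_pos hc hM) hheight _) hτ hp (hq i)).ne'
  · refine eq_empty_of_forall_notMem fun x hx => ?_
    obtain ⟨σ, hσ, hsupp⟩ := exists_mem_of_baryCoord_ne_zero hcov x
    have hmem : ∀ i, ps i ∈ σ := fun i => hsupp _ <| ne_of_gt <|
      lt_of_lt_of_le (by positivity) (inv_le_baryCoord_of_mem_Tset h𝒟 hcard (mem_iInter.1 hx i))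
    have hle :=
      Finset.card_le_card_of_injOn (s := Finset.univ) ps (fun i _ => hmem i) hinj.injOn
    simp [hcard σ hσ] at hle

/-- Under the standing assumptions, the tessellation `{T(p) : p ∈ P}` is
`cM/(d+1)`-separated: (a) if finitely many distinct cells all come within distance
`cM/(d+1)` of a common point, they have a common point; (b) any `d+2` distinct
cells have empty intersection. -/
theorem stmt15 (hd : 1 ≤ d) (M c : ℝ) (hM : 0 < M) (hc : 0 < c)
    (P : Set (EuclideanSpace ℝ (Fin d))) (𝒟 : Set (Finset (EuclideanSpace ℝ (Fin d))))
    (hS : Standing M c P 𝒟) :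
    (∀ (n : ℕ) (ps : Fin (n + 1) → EuclideanSpace ℝ (Fin d)),
      Function.Injective ps → (∀ i, ps i ∈ P) →
      ∀ q : EuclideanSpace ℝ (Fin d),
        (∀ i, Metric.infDist q (Tset 𝒟 (ps i)) < c * M / (d + 1)) →
        (⋂ i, Tset 𝒟 (ps i)).Nonempty) ∧
    (∀ ps : Fin (d + 2) → EuclideanSpace ℝ (Fin d),
      Function.Injective ps → (∀ i, ps i ∈ P) →
      (⋂ i, Tset 𝒟 (ps i)) = ∅) :=
  stmt15_general M c hM hc P 𝒟 hS
end
end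

section
/- Let K be a finite group acting freely by homeomorphisms on a Cantor set X. Then there exists a clopen subset E ⊆ X such that the sets k·E, for k ∈ K, are pairwise disjoint and their union is X. -/
/-!
Since `K` is finite and acts freely, every point has a neighbourhood disjoint from all its
nontrivial translates, and in a compact totally disconnected Hausdorff space it may be taken
clopen. Finitely many such clopens `V₁, …, Vₙ` cover `X`. A fundamental domain is then built
greedily: if `E` and `V` are clopen with pairwise disjoint translates, so is `E ∪ (V \ K • E)`, and its
saturation contains both that of `E` and `V`.
-/

open Set Function Pointwise

section DisjointTranslates

variable (G : Type*) {X : Type*} [Group G] [MulAction G X]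

def HasDisjointTranslates (s : Set X) : Prop :=
  Pairwise (Disjoint on fun g : G => g • s)

variable {G}

theorem hasDisjointTranslates_iff {s : Set X} :
    HasDisjointTranslates G s ↔ ∀ (g : G) (x : X), x ∈ s → g • x ∈ s → g = 1 := by
  constructor
  · intro hs g x hx hgx
    by_contra hg
    exact Set.disjoint_left.1 (hs hg) (smul_mem_smul_set hx) (by simpa using hgx)
  · rintro hs g g' hgg'
    refine Set.disjoint_left.2 ?_
    rintro _ ⟨a, ha, rfl⟩ ⟨b, hb, hba : g' • b = g • a⟩
    have hba : (g⁻¹ * g') • b = a := by rw [mul_smul, hba, inv_smul_smul]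
    exact hgg' (inv_mul_eq_one.1 (hs _ b hb (hba ▸ ha)))

theorem HasDisjointTranslates.mono {s t : Set X} (hs : HasDisjointTranslates G s) (hts : t ⊆ s) :
    HasDisjointTranslates G t :=
  fun _ _ hgg' => (hs hgg').mono (smul_set_mono hts) (smul_set_mono hts)

theorem HasDisjointTranslates.union_diff_iUnion_smul {s t : Set X}
    (hs : HasDisjointTranslates G s) (ht : HasDisjointTranslates G t) :
    HasDisjointTranslates G (s ∪ (t \ ⋃ g : G, g • s)) := by
  rw [hasDisjointTranslates_iff] at hs ht ⊢
  have smul_mem_orbit : ∀ (g : G) {x : X}, x ∈ s → g • x ∈ ⋃ g : G, g • s :=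
    fun g x hx => mem_iUnion.2 ⟨g, smul_mem_smul_set hx⟩
  rintro g x (hx | ⟨hxt, hxs⟩) (hgx | ⟨hgxt, hgxs⟩)
  · exact hs g x hx hgx
  · exact absurd (smul_mem_orbit g hx) hgxs
  · exact absurd (by simpa using smul_mem_orbit g⁻¹ hgx) hxs
  · exact ht g x hxt hgxt

theorem subset_iUnion_smul_union_diff_iUnion_smul (s t : Set X) :
    (⋃ g : G, g • s) ∪ t ⊆ ⋃ g : G, g • (s ∪ (t \ ⋃ g : G, g • s)) := by
  refine union_subset (iUnion_mono fun g => smul_set_mono subset_union_left) fun x hxt => ?_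
  by_cases hx : x ∈ ⋃ g : G, g • s
  · obtain ⟨g, hg⟩ := mem_iUnion.1 hx
    exact mem_iUnion.2 ⟨g, smul_set_mono subset_union_left hg⟩
  · exact mem_iUnion.2 ⟨1, by rw [one_smul]; exact Or.inr ⟨hxt, hx⟩⟩

end DisjointTranslates

section Topology

variable {G X : Type*} [Group G] [MulAction G X] [TopologicalSpace X] [ContinuousConstSMul G X]

theorem exists_isClopen_mem_hasDisjointTranslates [Finite G] [CompactSpace X] [T2Space X]
    [TotallyDisconnectedSpace X] (hfree : ∀ (g : G) (x : X), g • x = x → g = 1) (x : X) :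
    ∃ V : Set X, IsClopen V ∧ x ∈ V ∧ HasDisjointTranslates G V := by
  obtain ⟨U, hU, hUdisj⟩ := ProperlyDiscontinuousSMul.exists_nhds_disjoint_image G x
  obtain ⟨W, hWU, hWopen, hxW⟩ := mem_nhds_iff.1 hU
  obtain ⟨V, hV, hxV, hVW⟩ := compact_exists_isClopen_in_isOpen hWopen hxW
  refine ⟨V, hV, hxV, hasDisjointTranslates_iff.2 fun g y hy hgy => ?_⟩
  by_contra hg
  exact Set.disjoint_left.1 (hUdisj g fun h => hg (hfree g x h))
    (mem_image_of_mem _ (hWU (hVW hy))) (hWU (hVW hgy))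

theorem exists_isClopen_hasDisjointTranslates_biUnion_subset [Finite G] {ι : Type*}
    (V : ι → Set X) (t : Finset ι) (hV : ∀ i ∈ t, IsClopen (V i) ∧ HasDisjointTranslates G (V i)) :
    ∃ E : Set X, IsClopen E ∧ HasDisjointTranslates G E ∧ ⋃ i ∈ t, V i ⊆ ⋃ g : G, g • E := by
  classical
  induction t using Finset.induction_on with
  | empty => exact ⟨∅, isClopen_empty, fun _ _ _ => by simp, by simp⟩
  | insert i t _ ih =>
    obtain ⟨hVi, hVi_disj⟩ := hV i (Finset.mem_insert_self i t)
    obtain ⟨E, hE, hE_disj, ht⟩ := ih fun j hj => hV j (Finset.mem_insert_of_mem hj)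
    have hE_orbit : IsClopen (⋃ g : G, g • E) :=
      isClopen_iUnion_of_finite fun g => ⟨hE.1.smul g, hE.2.smul g⟩
    refine ⟨E ∪ (V i \ ⋃ g : G, g • E), hE.union (hVi.diff hE_orbit),
      hE_disj.union_diff_iUnion_smul hVi_disj, ?_⟩
    have hcov := subset_iUnion_smul_union_diff_iUnion_smul (G := G) E (V i)
    rw [Finset.set_biUnion_insert]
    exact union_subset (fun x hx => hcov (Or.inr hx)) (ht.trans fun x hx => hcov (Or.inl hx))

theorem exists_isClopen_hasDisjointTranslates_iUnion_smul_eq_univ [Finite G] [CompactSpace X]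
    [T2Space X] [TotallyDisconnectedSpace X] (hfree : ∀ (g : G) (x : X), g • x = x → g = 1) :
    ∃ E : Set X, IsClopen E ∧ HasDisjointTranslates G E ∧ ⋃ g : G, g • E = univ := by
  choose V hV hxV hV_disj using exists_isClopen_mem_hasDisjointTranslates hfree
  obtain ⟨t, ht⟩ := isCompact_univ.elim_finite_subcover V (fun x => (hV x).isOpen)
    fun x _ => mem_iUnion.2 ⟨x, hxV x⟩
  obtain ⟨E, hE, hE_disj, hcov⟩ :=
    exists_isClopen_hasDisjointTranslates_biUnion_subset V t fun x _ => ⟨hV x, hV_disj x⟩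
  exact ⟨E, hE, hE_disj, eq_univ_of_univ_subset (ht.trans hcov)⟩

end Topology

theorem stmt17_general {K X : Type*} [Group K] [Finite K]
    [TopologicalSpace X] [CompactSpace X] [TopologicalSpace.MetrizableSpace X]
    [TotallyDisconnectedSpace X]
    (act : K → X → X)
    (hone : ∀ x, act 1 x = x)
    (hmul : ∀ k k' x, act (k * k') x = act k (act k' x))
    (hcont : ∀ k, Continuous (act k))
    (hfree : ∀ k x, act k x = x → k = 1) :
    ∃ E : Set X, IsClopen E ∧
      (∀ k k' : K, k ≠ k' → Disjoint (act k '' E) (act k' '' E)) ∧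
      (⋃ k : K, act k '' E) = Set.univ := by
  let _ : MulAction K X := { smul := act, one_smul := hone, mul_smul := hmul }
  have : ContinuousConstSMul K X := ⟨hcont⟩
  obtain ⟨E, hE, hE_disj, hcov⟩ := exists_isClopen_hasDisjointTranslates_iUnion_smul_eq_univ hfree
  exact ⟨E, hE, fun k k' hkk' => hE_disj hkk', hcov⟩

/-- Let `K` be a finite group acting freely by homeomorphisms on a Cantor set `X`
(non-empty, compact, metrizable, totally disconnected, with no isolated points).
Then there is a clopen subset `E ⊆ X` such that the sets `k·E`, `k ∈ K`, are
pairwise disjoint and cover `X`. -/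
theorem stmt17 {K X : Type*} [Group K] [Finite K]
    [TopologicalSpace X] [CompactSpace X] [TopologicalSpace.MetrizableSpace X]
    [TotallyDisconnectedSpace X] [Nonempty X]
    (hperf : Perfect (Set.univ : Set X))
    (act : K → X → X)
    (hone : ∀ x, act 1 x = x)
    (hmul : ∀ k k' x, act (k * k') x = act k (act k' x))
    (hcont : ∀ k, Continuous (act k))
    (hfree : ∀ k x, act k x = x → k = 1) :
    ∃ E : Set X, IsClopen E ∧
      (∀ k k' : K, k ≠ k' → Disjoint (act k '' E) (act k' '' E)) ∧
      (⋃ k : K, act k '' E) = Set.univ :=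
  stmt17_general act hone hmul hcont hfree
end

section
/- Let K be a finite group, let d ≥ 1, and let φ be a free action of the group K × ℤ^d by homeomorphisms on a Cantor set X. Then there exists a free action ψ of ℤ^d by homeomorphisms on X such that R_φ = R_ψ; that is, for every x ∈ X, {φ^g(x) : g ∈ K × ℤ^d} = {ψ^n(x) : n ∈ ℤ^d}. -/
/-!
A free action of the finite group `K` on a compact totally disconnected space has a clopen
transversal, by compactness; equivalently there is a locally constant `K`-equivariant map
`c : X → K`. On the orbit of `x`, the element `g` then has coordinates `(c (φ g x), g.2)` in
`K × ℤ^d`, and the `ℤ^d`-part of `φ` translates the second coordinate. A bijection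
`Θ : K × ℤ^d ≃ ℤ^d` with `Θ (k, w + w') = Θ (k, w) + L w'` (on one coordinate,
`(k, n) ↦ n |K| + e k` for an enumeration `e` of `K`) turns these coordinates into coordinates
in `ℤ^d`, and `ψ v` is translation by `v` in them. Freeness of `φ` makes the coordinates
injective, so `ψ` is free, and local constancy of `c` makes each `ψ v` continuous.
-/

open Set

section Transversal

variable {K X : Type*} [Group K] [MulAction K X]

theorem exists_smul_mem_smul_iff (V : Set X) (a : K) (x : X) :
    (∃ k : K, k • a • x ∈ V) ↔ ∃ k : K, k • x ∈ V :=
  ⟨fun ⟨k, hk⟩ => ⟨k * a, by rwa [mul_smul]⟩,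
    fun ⟨k, hk⟩ => ⟨k * a⁻¹, by rwa [mul_smul, inv_smul_smul]⟩⟩

variable [TopologicalSpace X]

variable (K) in
def IsClopenTransversal (W U : Set X) : Prop :=
  IsClopen U ∧ ∀ x ∈ W, ∃! k : K, k • x ∈ U

theorem IsClopenTransversal.union {W₁ W₂ U₁ U₂ : Set X} (hW₁ : IsClopen W₁)
    (hW₁_inv : ∀ (k : K) x, k • x ∈ W₁ ↔ x ∈ W₁) (h₁ : IsClopenTransversal K W₁ U₁)
    (h₂ : IsClopenTransversal K W₂ U₂) : IsClopenTransversal K (W₁ ∪ W₂) (W₁.ite U₁ U₂) := by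
  refine ⟨(h₁.1.inter hW₁).union (h₂.1.diff hW₁), fun x hx => ?_⟩
  by_cases hx₁ : x ∈ W₁
  · simpa [Set.ite, hW₁_inv, hx₁] using h₁.2 x hx₁
  · simpa [Set.ite, hW₁_inv, hx₁] using h₂.2 x (hx.resolve_left hx₁)

theorem isClopenTransversal_setOf_exists_smul_mem {V : Set X} (hV : IsClopen V)
    (hV_disj : ∀ k : K, k ≠ 1 → ∀ y ∈ V, k • y ∉ V) :
    IsClopenTransversal K {x | ∃ k : K, k • x ∈ V} V := by
  refine ⟨hV, fun x ⟨k, hk⟩ => ⟨k, hk, fun k' hk' => ?_⟩⟩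
  by_contra hne
  refine hV_disj (k' * k⁻¹) (mul_inv_eq_one.not.2 hne) (k • x) hk ?_
  rwa [mul_smul, inv_smul_smul]

variable [ContinuousConstSMul K X]

theorem isClopen_setOf_exists_smul_mem [Finite K] {V : Set X} (hV : IsClopen V) :
    IsClopen {x | ∃ k : K, k • x ∈ V} := by
  convert isClopen_iUnion_of_finite fun k : K => hV.preimage (continuous_const_smul k)
  ext x
  simp

theorem exists_isClopen_mem_forall_smul_notMem [Finite K] [TotallySeparatedSpace X]
    (hfree : ∀ (k : K) (x : X), k • x = x → k = 1) (x : X) :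
    ∃ V : Set X, IsClopen V ∧ x ∈ V ∧ ∀ k : K, k ≠ 1 → ∀ y ∈ V, k • y ∉ V := by
  have hC : ∀ k : K, ∃ C : Set X, IsClopen C ∧ x ∈ C ∧ (k ≠ 1 → ∀ y ∈ C, k • y ∉ C) := by
    intro k
    by_cases hk : k = 1
    · exact ⟨univ, isClopen_univ, mem_univ x, fun h => absurd hk h⟩
    obtain ⟨D, hD, hxD, hkxD⟩ :=
      exists_isClopen_of_totally_separated fun h => hk (hfree k x h.symm)
    exact ⟨D ∩ (k • ·) ⁻¹' Dᶜ, hD.inter (hD.compl.preimage (continuous_const_smul k)),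
      ⟨hxD, hkxD⟩, fun _ y hy hky => hy.2 hky.1⟩
  choose C hC hxC hC_disj using hC
  exact ⟨⋂ k, C k, isClopen_iInter_of_finite hC, mem_iInter.2 hxC, fun k hk y hy hky =>
    hC_disj k hk y (mem_iInter.1 hy k) (mem_iInter.1 hky k)⟩

theorem exists_isClopen_forall_existsUnique_smul_mem [Finite K] [CompactSpace X] [T2Space X]
    [TotallyDisconnectedSpace X] (hfree : ∀ (k : K) (x : X), k • x = x → k = 1) :
    ∃ U : Set X, IsClopen U ∧ ∀ x, ∃! k : K, k • x ∈ U := by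
  -- being contained in an invariant clopen set with a clopen transversal is a local property
  -- stable under finite unions, so it holds for the compact set `univ`
  let P : Set X → Prop := fun S => ∃ W U, S ⊆ W ∧ IsClopen W ∧
    (∀ (k : K) x, k • x ∈ W ↔ x ∈ W) ∧ IsClopenTransversal K W U
  have hP : P univ := by
    refine isCompact_univ.induction_on ?_ ?_ ?_ ?_
    · exact ⟨∅, ∅, subset_rfl, isClopen_empty, by simp, isClopen_empty, by simp⟩
    · rintro S T hST ⟨W, U, hTW, hW⟩
      exact ⟨W, U, hST.trans hTW, hW⟩
    · rintro S T ⟨W₁, U₁, hSW, hW₁, hW₁_inv, h₁⟩ ⟨W₂, U₂, hTW, hW₂, hW₂_inv, h₂⟩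
      refine ⟨W₁ ∪ W₂, W₁.ite U₁ U₂, union_subset_union hSW hTW, hW₁.union hW₂,
        fun k x => ?_, h₁.union hW₁ hW₁_inv h₂⟩
      simp only [mem_union, hW₁_inv, hW₂_inv]
    · intro x _
      obtain ⟨V, hV, hxV, hV_disj⟩ := exists_isClopen_mem_forall_smul_notMem hfree x
      refine ⟨V, mem_nhdsWithin_of_mem_nhds (hV.isOpen.mem_nhds hxV),
        {x | ∃ k : K, k • x ∈ V}, V, fun y hy => ⟨1, by rwa [one_smul]⟩,
        isClopen_setOf_exists_smul_mem hV, exists_smul_mem_smul_iff V,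
        isClopenTransversal_setOf_exists_smul_mem hV hV_disj⟩
  obtain ⟨W, U, hW, -, -, hU, hUW⟩ := hP
  exact ⟨U, hU, fun x => hUW x (hW (mem_univ x))⟩

theorem exists_isLocallyConstant_map_smul_eq_mul [Finite K] [CompactSpace X] [T2Space X]
    [TotallyDisconnectedSpace X] (hfree : ∀ (k : K) (x : X), k • x = x → k = 1) :
    ∃ c : X → K, IsLocallyConstant c ∧ ∀ (a : K) x, c (a • x) = a * c x := by
  obtain ⟨U, hU, hUx⟩ := exists_isClopen_forall_existsUnique_smul_mem hfree
  choose k hk hk_unique using hUx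
  refine ⟨fun x => (k x)⁻¹, IsLocallyConstant.iff_isOpen_fiber.2 fun a => ?_, fun a x => ?_⟩
  · convert hU.isOpen.preimage (continuous_const_smul a⁻¹) using 1
    ext x
    simp only [mem_preimage, mem_singleton_iff, inv_eq_iff_eq_inv]
    exact ⟨fun h => h ▸ hk x, fun h => (hk_unique x _ h).symm⟩
  · have hkax : k (a • x) = k x * a⁻¹ := by
      refine (hk_unique (a • x) _ ?_).symm
      show (k x * a⁻¹) • a • x ∈ U
      rw [mul_smul, inv_smul_smul]
      exact hk x
    simp only [hkax, mul_inv_rev, inv_inv]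

end Transversal

theorem continuous_apply_of_isLocallyConstant {G X Y : Type*} [TopologicalSpace X]
    [TopologicalSpace Y] {φ : G → X → Y} (hφ : ∀ g, Continuous (φ g)) {F : X → G}
    (hF : IsLocallyConstant F) : Continuous fun x => φ (F x) x :=
  continuous_iff_continuousAt.2 fun x => (hφ (F x)).continuousAt.congr <| by
    filter_upwards [hF.eventually_eq x] with y hy
    rw [hy]

structure IsProdAction {K A X : Type*} [Group K] [AddGroup A] (φ : K × A → X → X) : Prop where
  map_one : ∀ x, φ (1, 0) x = x
  map_mul : ∀ g h : K × A, ∀ x, φ (g.1 * h.1, g.2 + h.2) x = φ g (φ h x)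

section Reindexing

variable {K A X : Type*} [Group K] (φ : K × A → X → X) (c : X → K)

-- the `g` with `c (φ g x) = q.1` and `g.2 = q.2`
def elemWithCoord (x : X) (q : K × A) : K × A := (q.1 * (c (φ (1, q.2) x))⁻¹, q.2)

theorem isLocallyConstant_elemWithCoord [TopologicalSpace X] {φ : K × A → X → X} {c : X → K}
    (hcont : ∀ g, Continuous (φ g)) (hc : IsLocallyConstant c) (q : K × A) :
    IsLocallyConstant fun x => elemWithCoord φ c x q :=
  (hc.comp_continuous (hcont (1, q.2))).comp fun k => (q.1 * k⁻¹, q.2)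

variable [AddGroup A]

def reindexedAction (Θ : K × A ≃ A) (v : A) (x : X) : X :=
  φ (elemWithCoord φ c x (Θ.symm (v + Θ (c x, 0)))) x

variable {φ c} {Θ : K × A ≃ A}

theorem IsProdAction.map_apply_eq_mul (hφ : IsProdAction φ)
    (hc : ∀ a x, c (φ (a, 0) x) = a * c x) (g : K × A) (x : X) :
    c (φ g x) = g.1 * c (φ (1, g.2) x) := by
  rw [← hc, ← hφ.map_mul]
  simp

theorem IsProdAction.map_apply_elemWithCoord (hφ : IsProdAction φ)
    (hc : ∀ a x, c (φ (a, 0) x) = a * c x) (x : X) (q : K × A) :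
    c (φ (elemWithCoord φ c x q) x) = q.1 := by
  rw [hφ.map_apply_eq_mul hc]
  exact inv_mul_cancel_right _ _

theorem IsProdAction.elemWithCoord_map_apply (hφ : IsProdAction φ)
    (hc : ∀ a x, c (φ (a, 0) x) = a * c x) (x : X) (g : K × A) :
    elemWithCoord φ c x (c (φ g x), g.2) = g := by
  rw [hφ.map_apply_eq_mul hc]
  exact Prod.ext (mul_inv_cancel_right _ _) rfl

theorem IsProdAction.reindexedAction_zero (hφ : IsProdAction φ) (x : X) :
    reindexedAction φ c Θ 0 x = x := by
  simp [reindexedAction, elemWithCoord, hφ.map_one]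

theorem IsProdAction.reindexedAction_add (hφ : IsProdAction φ)
    (hc : ∀ a x, c (φ (a, 0) x) = a * c x) {L : A → A}
    (hΘ : ∀ k a b, Θ (k, a + b) = Θ (k, a) + L b) (v w : A) (x : X) :
    reindexedAction φ c Θ (v + w) x = reindexedAction φ c Θ v (reindexedAction φ c Θ w x) := by
  set q := Θ.symm (w + Θ (c x, 0))
  set g := elemWithCoord φ c x q
  set q' := Θ.symm (v + Θ (q.1, 0))
  set h := elemWithCoord φ c (φ g x) q'
  have hΘq : Θ (q'.1, q'.2 + q.2) = v + w + Θ (c x, 0) := by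
    calc Θ (q'.1, q'.2 + q.2) = v + Θ (q.1, 0) + L q.2 := by rw [hΘ, Equiv.apply_symm_apply]
      _ = v + (w + Θ (c x, 0)) := by rw [add_assoc, ← hΘ, zero_add, Equiv.apply_symm_apply]
      _ = v + w + Θ (c x, 0) := (add_assoc _ _ _).symm
  have hhg : elemWithCoord φ c x (q'.1, q'.2 + q.2) = (h.1 * g.1, h.2 + g.2) := by
    rw [← hφ.elemWithCoord_map_apply hc x (h.1 * g.1, h.2 + g.2), hφ.map_mul,
      hφ.map_apply_elemWithCoord hc]
    rfl
  simp only [reindexedAction, ← hΘq, Equiv.symm_apply_apply, hφ.map_apply_elemWithCoord hc]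
  rw [hhg, hφ.map_mul]

theorem IsProdAction.eq_zero_of_reindexedAction_eq_self (hφ : IsProdAction φ)
    (hc : ∀ a x, c (φ (a, 0) x) = a * c x) (hfree : ∀ g x, φ g x = x → g = (1, 0)) {v : A}
    {x : X} (h : reindexedAction φ c Θ v x = x) : v = 0 := by
  set q := Θ.symm (v + Θ (c x, 0)) with hq
  have hg : elemWithCoord φ c x q = (1, 0) := hfree _ _ h
  have hqx : q = (c x, 0) :=
    Prod.ext (by rw [← hφ.map_apply_elemWithCoord hc x q, hg, hφ.map_one])
      (congrArg Prod.snd hg :)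
  rwa [hq, Equiv.symm_apply_eq, add_eq_right] at hqx

theorem IsProdAction.setOf_map_apply_eq (hφ : IsProdAction φ)
    (hc : ∀ a x, c (φ (a, 0) x) = a * c x) (x : X) :
    {y | ∃ g, φ g x = y} = {y | ∃ v, reindexedAction φ c Θ v x = y} := by
  ext y
  constructor
  · rintro ⟨g, rfl⟩
    refine ⟨Θ (c (φ g x), g.2) - Θ (c x, 0), ?_⟩
    simp only [reindexedAction, sub_add_cancel, Equiv.symm_apply_apply,
      hφ.elemWithCoord_map_apply hc]
  · rintro ⟨v, rfl⟩
    exact ⟨_, rfl⟩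

variable [TopologicalSpace X]

theorem continuous_reindexedAction (hcont : ∀ g, Continuous (φ g)) (hc : IsLocallyConstant c)
    (v : A) : Continuous (reindexedAction φ c Θ v) :=
  continuous_apply_of_isLocallyConstant
    (φ := fun k x => φ (elemWithCoord φ c x (Θ.symm (v + Θ (k, 0)))) x)
    (fun _ => continuous_apply_of_isLocallyConstant hcont
      (isLocallyConstant_elemWithCoord hcont hc _)) hc

end Reindexing

def Equiv.prodPiUpdate {K M ι : Type*} [DecidableEq ι] (β : K × M ≃ M) (i : ι) :
    K × (ι → M) ≃ (ι → M) where
  toFun p := Function.update p.2 i (β (p.1, p.2 i))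
  invFun v := ((β.symm (v i)).1, Function.update v i (β.symm (v i)).2)
  left_inv p := by simp
  right_inv v := by simp

theorem Equiv.prodPiUpdate_add {K M ι : Type*} [DecidableEq ι] [Add M] {β : K × M ≃ M}
    {L : M → M} (hβ : ∀ k a b, β (k, a + b) = β (k, a) + L b) (i : ι) (k : K) (w w' : ι → M) :
    prodPiUpdate β i (k, w + w') = prodPiUpdate β i (k, w) + Function.update w' i (L (w' i)) := by
  ext j
  rcases eq_or_ne j i with rfl | hj
  · simp [prodPiUpdate, hβ]
  · simp [prodPiUpdate, hj]

theorem exists_prodEquiv_int_add (K : Type*) [Finite K] [Nonempty K] :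
    ∃ β : K × ℤ ≃ ℤ, ∀ k a b, β (k, a + b) = β (k, a) + b * Nat.card K := by
  have : NeZero (Nat.card K) := ⟨Nat.card_pos.ne'⟩
  refine ⟨((Finite.equivFin K).prodCongr (.refl ℤ)).trans
    ((Equiv.prodComm _ _).trans (Int.divModEquiv _).symm), fun k a b => ?_⟩
  simp only [Equiv.trans_apply, Equiv.prodCongr_apply, Equiv.prodComm_apply,
    Int.divModEquiv_symm_apply, Equiv.coe_refl, Prod.map_apply, id_eq, Prod.swap_prod_mk]
  ring

theorem stmt18_general {K X : Type*} [Group K] [Finite K] (d : ℕ) (hd : 1 ≤ d)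
    [TopologicalSpace X] [CompactSpace X] [TopologicalSpace.MetrizableSpace X]
    [TotallyDisconnectedSpace X]
    (φ : K × (Fin d → ℤ) → X → X)
    (hone : ∀ x, φ (1, 0) x = x)
    (hmul : ∀ g h : K × (Fin d → ℤ), ∀ x, φ (g.1 * h.1, g.2 + h.2) x = φ g (φ h x))
    (hcont : ∀ g, Continuous (φ g))
    (hfree : ∀ g x, φ g x = x → g = (1, 0)) :
    ∃ ψ : (Fin d → ℤ) → X → X,
      (∀ x, ψ 0 x = x) ∧
      (∀ m n x, ψ (m + n) x = ψ m (ψ n x)) ∧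
      (∀ n, Continuous (ψ n)) ∧
      (∀ n x, ψ n x = x → n = 0) ∧
      ∀ x : X, {y | ∃ g, φ g x = y} = {y | ∃ n, ψ n x = y} := by
  have hφ : IsProdAction φ := ⟨hone, hmul⟩
  let _ : MulAction K X :=
    { smul := fun k x => φ (k, 0) x
      one_smul := hone
      mul_smul := fun a b x => (add_zero (0 : Fin d → ℤ)) ▸ hmul (a, 0) (b, 0) x }
  have : ContinuousConstSMul K X := ⟨fun k => hcont (k, 0)⟩
  obtain ⟨c, hc_loc, hc⟩ := exists_isLocallyConstant_map_smul_eq_mul (K := K) (X := X)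
    fun k x h => congrArg Prod.fst (hfree (k, 0) x h)
  obtain ⟨β, hβ⟩ := exists_prodEquiv_int_add K
  let Θ := Equiv.prodPiUpdate β (⟨0, hd⟩ : Fin d)
  have hΘ := Equiv.prodPiUpdate_add hβ (⟨0, hd⟩ : Fin d)
  exact ⟨reindexedAction φ c Θ, hφ.reindexedAction_zero, hφ.reindexedAction_add hc hΘ,
    continuous_reindexedAction hcont hc_loc,
    fun _ _ => hφ.eq_zero_of_reindexedAction_eq_self hc hfree, hφ.setOf_map_apply_eq hc⟩

/-- Let `K` be a finite group, `d ≥ 1`, and let `φ` be a free action of `K × ℤ^d`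
by homeomorphisms on a Cantor set `X`. Then there is a free action `ψ` of `ℤ^d` by
homeomorphisms on `X` with the same orbits: for every `x ∈ X`,
`{φ^g(x) : g ∈ K × ℤ^d} = {ψ^n(x) : n ∈ ℤ^d}`. -/
theorem stmt18 {K X : Type*} [Group K] [Finite K] (d : ℕ) (hd : 1 ≤ d)
    [TopologicalSpace X] [CompactSpace X] [TopologicalSpace.MetrizableSpace X]
    [TotallyDisconnectedSpace X] [Nonempty X]
    (hperf : Perfect (Set.univ : Set X))
    (φ : K × (Fin d → ℤ) → X → X)
    (hone : ∀ x, φ (1, 0) x = x)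
    (hmul : ∀ g h : K × (Fin d → ℤ), ∀ x, φ (g.1 * h.1, g.2 + h.2) x = φ g (φ h x))
    (hcont : ∀ g, Continuous (φ g))
    (hfree : ∀ g x, φ g x = x → g = (1, 0)) :
    ∃ ψ : (Fin d → ℤ) → X → X,
      (∀ x, ψ 0 x = x) ∧
      (∀ m n x, ψ (m + n) x = ψ m (ψ n x)) ∧
      (∀ n, Continuous (ψ n)) ∧
      (∀ n x, ψ n x = x → n = 0) ∧
      ∀ x : X, {y | ∃ g, φ g x = y} = {y | ∃ n, ψ n x = y} :=
  stmt18_general d hd φ hone hmul hcont hfree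
end

section
/- Let X ⊆ Ω be a flat Cantor transversal for a free minimal continuous action φ of ℝ^d on a compact metrizable space Ω. Then the induced equivalence relation R_φ on X is minimal; that is, for every x ∈ X, the set {φ^p(x) : p ∈ ℝ^d, φ^p(x) ∈ X} is dense in X. -/
noncomputable section

open Metric

variable {d : ℕ} {Ω : Type*} [TopologicalSpace Ω]

/-- `φ` is a continuous action of `ℝ^d` on `Ω` by homeomorphisms. -/
def IsCtsAction (φ : EuclideanSpace ℝ (Fin d) → Ω → Ω) : Prop :=
  Continuous (fun q : EuclideanSpace ℝ (Fin d) × Ω => φ q.1 q.2) ∧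
    (∀ x, φ 0 x = x) ∧ ∀ p q x, φ (p + q) x = φ p (φ q x)

/-- The action `φ` is free. -/
def IsFreeAction (φ : EuclideanSpace ℝ (Fin d) → Ω → Ω) : Prop :=
  ∀ p x, φ p x = x → p = 0

/-- The action `φ` is minimal: every orbit is dense. -/
def IsMinimalAction (φ : EuclideanSpace ℝ (Fin d) → Ω → Ω) : Prop :=
  ∀ x : Ω, Dense (Set.range fun p => φ p x)

/-- `U` is a clopen subset of `X` (in the subspace topology of `X`). -/
def ClopenIn (U X : Set Ω) : Prop :=
  U ⊆ X ∧ IsClopen (Subtype.val ⁻¹' U : Set X)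

/-- `X ⊆ Ω` is a flat Cantor transversal for the free action `φ` of `ℝ^d` on `Ω`:
(1) `X` is a Cantor set (non-empty, closed — hence compact —, totally disconnected,
without isolated points); (2) every `φ`-orbit meets `X`; (3) there is `M > 0` such
that `C = {φ^p(x) : x ∈ X, p ∈ B(0,M)}` is open and `(x,p) ↦ φ^p(x)` is a
homeomorphism from `X × B(0,M)` onto `C`; (4) the return times to `X` in a bounded
window are locally constant. -/
def FlatCantorTransversal (φ : EuclideanSpace ℝ (Fin d) → Ω → Ω) (X : Set Ω) : Prop :=
  Perfect X ∧ X.Nonempty ∧ IsTotallyDisconnected X ∧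
  (∀ x : Ω, ∃ p, φ p x ∈ X) ∧
  (∃ M : ℝ, 0 < M ∧
    IsOpen {ω : Ω | ∃ x ∈ X, ∃ p ∈ ball (0 : EuclideanSpace ℝ (Fin d)) M, φ p x = ω} ∧
    ∃ e : (X × ball (0 : EuclideanSpace ℝ (Fin d)) M) ≃ₜ
        {ω : Ω | ∃ x ∈ X, ∃ p ∈ ball (0 : EuclideanSpace ℝ (Fin d)) M, φ p x = ω},
      ∀ xp : X × ball (0 : EuclideanSpace ℝ (Fin d)) M,
        (e xp : Ω) = φ (xp.2 : EuclideanSpace ℝ (Fin d)) (xp.1 : Ω)) ∧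
  (∀ x ∈ X, ∀ r : ℝ, 0 < r → ∃ U ⊆ X, x ∈ U ∧ (∃ O, IsOpen O ∧ U = O ∩ X) ∧
    ∀ y ∈ U, {p ∈ ball (0 : EuclideanSpace ℝ (Fin d)) r | φ p x ∈ X}
      = {p ∈ ball (0 : EuclideanSpace ℝ (Fin d)) r | φ p y ∈ X})

/-- `P_U(x) = {p ∈ ℝ^d : φ^p(x) ∈ U}`. -/
def Porbit (φ : EuclideanSpace ℝ (Fin d) → Ω → Ω) (U : Set Ω) (x : Ω) :
    Set (EuclideanSpace ℝ (Fin d)) :=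
  {p | φ p x ∈ U}

/-!
The flow box over `O ∩ X` of width `M` is the homeomorphic image of an open subset of
`X × B(0,M)` inside the open set `C`, hence open in `Ω`; it contains any point of `O ∩ X`,
so by minimality the orbit of `x` enters it, at a point `φ^q z` with `z ∈ O ∩ X`.
Flowing back by `-q` lands in `O ∩ X` on the orbit of `x`.
-/

/-- `φ(U × B(0,M))`; for `U = X` this is the set `C` of condition (3). -/
def flowBox (φ : EuclideanSpace ℝ (Fin d) → Ω → Ω) (U : Set Ω) (M : ℝ) : Set Ω :=
  {ω | ∃ x ∈ U, ∃ p ∈ ball (0 : EuclideanSpace ℝ (Fin d)) M, φ p x = ω}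

namespace IsCtsAction

variable {φ : EuclideanSpace ℝ (Fin d) → Ω → Ω}

theorem neg_apply_apply (hφ : IsCtsAction φ) (q : EuclideanSpace ℝ (Fin d)) (z : Ω) :
    φ (-q) (φ q z) = z := by
  rw [← hφ.2.2, neg_add_cancel, hφ.2.1]

theorem subset_flowBox (hφ : IsCtsAction φ) (U : Set Ω) {M : ℝ} (hM : 0 < M) :
    U ⊆ flowBox φ U M :=
  fun y hy => ⟨y, hy, 0, mem_ball_self hM, hφ.2.1 y⟩

theorem exists_apply_mem_of_apply_mem_flowBox (hφ : IsCtsAction φ) {U : Set Ω} {M : ℝ}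
    {x : Ω} {p : EuclideanSpace ℝ (Fin d)} (hp : φ p x ∈ flowBox φ U M) :
    ∃ r, φ r x ∈ U := by
  obtain ⟨z, hz, q, -, hqz⟩ := hp
  refine ⟨-q + p, ?_⟩
  rwa [hφ.2.2, ← hqz, hφ.neg_apply_apply]

end IsCtsAction

theorem FlatCantorTransversal.exists_isOpen_flowBox {φ : EuclideanSpace ℝ (Fin d) → Ω → Ω}
    {X : Set Ω} (hX : FlatCantorTransversal φ X) :
    ∃ M > 0, ∀ O : Set Ω, IsOpen O → IsOpen (flowBox φ (O ∩ X) M) := by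
  obtain ⟨-, -, -, -, ⟨M, hM, hCopen, e, he⟩, -⟩ := hX
  refine ⟨M, hM, fun O hO => ?_⟩
  have hS : IsOpen {xp : X × ball (0 : EuclideanSpace ℝ (Fin d)) M | (xp.1 : Ω) ∈ O} :=
    hO.preimage (continuous_subtype_val.comp continuous_fst)
  convert hCopen.isOpenMap_subtype_val _ (e.isOpen_image.mpr hS) using 1
  ext ω
  constructor
  · rintro ⟨z, ⟨hzO, hzX⟩, q, hq, rfl⟩
    exact ⟨e (⟨z, hzX⟩, ⟨q, hq⟩), ⟨_, hzO, rfl⟩, he _⟩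
  · rintro ⟨-, ⟨xp, hxp, rfl⟩, rfl⟩
    exact ⟨xp.1, ⟨hxp, xp.1.2⟩, xp.2, xp.2.2, (he xp).symm⟩

theorem stmt19_general
    (φ : EuclideanSpace ℝ (Fin d) → Ω → Ω) (X : Set Ω)
    (hact : IsCtsAction φ) (hmin : IsMinimalAction φ)
    (hX : FlatCantorTransversal φ X) :
    ∀ x ∈ X, ∀ O : Set Ω, IsOpen O → (O ∩ X).Nonempty →
      ∃ p : EuclideanSpace ℝ (Fin d), φ p x ∈ O ∩ X := by
  obtain ⟨M, hM, hbox⟩ := hX.exists_isOpen_flowBox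
  rintro x - O hO hne
  obtain ⟨-, ⟨p, rfl⟩, hp⟩ :=
    (hmin x).exists_mem_open (hbox O hO) (hne.mono (hact.subset_flowBox _ hM))
  exact hact.exists_apply_mem_of_apply_mem_flowBox hp

/-- If `X ⊆ Ω` is a flat Cantor transversal for a free minimal continuous action `φ`
of `ℝ^d` on a compact metrizable space `Ω`, then the induced equivalence relation
`R_φ` on `X` is minimal: for every `x ∈ X`, the set
`{φ^p(x) : p ∈ ℝ^d, φ^p(x) ∈ X}` is dense in `X`. -/
theorem stmt19 [CompactSpace Ω] [TopologicalSpace.MetrizableSpace Ω] (hd : 1 ≤ d)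
    (φ : EuclideanSpace ℝ (Fin d) → Ω → Ω) (X : Set Ω)
    (hact : IsCtsAction φ) (hfree : IsFreeAction φ) (hmin : IsMinimalAction φ)
    (hX : FlatCantorTransversal φ X) :
    ∀ x ∈ X, ∀ O : Set Ω, IsOpen O → (O ∩ X).Nonempty →
      ∃ p : EuclideanSpace ℝ (Fin d), φ p x ∈ O ∩ X :=
  stmt19_general φ X hact hmin hX
end
end
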